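/- arXiv:1509.01960 — 2 statements merged into one kernel-verified Lean document; each statement's English description precedes it below -/
import Mathlib

section
/- Let m ≥ 1, x, y ∈ ℝ^m, and a, s ∈ ℝ. Set u = ⟪x,y⟫, b = ‖x‖²‖y‖², D = s² + b − (u−a)², and let A be the 2×2 matrix over Cℓ_{0,m} with entries A₁₁ = (a−u)·1, A₁₂ = −ι(x)·ι(y), A₂₁ = ι(y)·ι(x), A₂₂ = (u−a)·1. Then: (i) A·A = ((a−u)² − b)·I; (ii) if D ≠ 0, the matrix M := D⁻¹·(s·I − A) satisfies (s·I + A)·M = I and M·(s·I + A) = I, i.e. M = (s·I + A)⁻¹; and (iii) the sum of the two entries of the bottom row of M equals D⁻¹·((s + a − u)·1 − ι(y)·ι(x)), i.e. (0 1)·(s·I + A)⁻¹·(1,1)ᵀ = ((s − u + a)·1 − ι(y)·ι(x)) / (s² + b − (u−a)²). -/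
open scoped RealInnerProductSpace

/-- The negative-definite quadratic form `Q(v) = -‖v‖²` on Euclidean space `ℝ^m`,
defining the Clifford algebra `Cℓ_{0,m}`. -/
noncomputable def Qneg (m : ℕ) : QuadraticForm ℝ (EuclideanSpace ℝ (Fin m)) :=
  -(LinearMap.BilinMap.toQuadraticMap
      (innerₗ (EuclideanSpace ℝ (Fin m))))

lemma Qneg_apply (m : ℕ) (v : EuclideanSpace ℝ (Fin m)) : Qneg m v = -‖v‖ ^ 2 := by
  simp [Qneg]

lemma prod_four (m : ℕ) (x y : EuclideanSpace ℝ (Fin m)) :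
    (CliffordAlgebra.ι (Qneg m) x * CliffordAlgebra.ι (Qneg m) y) *
      (CliffordAlgebra.ι (Qneg m) y * CliffordAlgebra.ι (Qneg m) x) =
    algebraMap ℝ (CliffordAlgebra (Qneg m)) (‖x‖ ^ 2 * ‖y‖ ^ 2) := by
  have hy := CliffordAlgebra.ι_sq_scalar (Qneg m) y
  have hx := CliffordAlgebra.ι_sq_scalar (Qneg m) x
  calc (CliffordAlgebra.ι (Qneg m) x * CliffordAlgebra.ι (Qneg m) y) *
      (CliffordAlgebra.ι (Qneg m) y * CliffordAlgebra.ι (Qneg m) x)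
      = CliffordAlgebra.ι (Qneg m) x * (CliffordAlgebra.ι (Qneg m) y *
        CliffordAlgebra.ι (Qneg m) y) * CliffordAlgebra.ι (Qneg m) x := by
        rw [mul_assoc, mul_assoc, ← mul_assoc (CliffordAlgebra.ι (Qneg m) y)]
    _ = algebraMap ℝ _ (Qneg m y) * (CliffordAlgebra.ι (Qneg m) x *
        CliffordAlgebra.ι (Qneg m) x) := by
        rw [hy, ← Algebra.commutes, mul_assoc]
    _ = algebraMap ℝ _ (Qneg m y) * algebraMap ℝ _ (Qneg m x) := by rw [hx]
    _ = _ := by rw [← map_mul, Qneg_apply, Qneg_apply]; ring_nf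

/-- The 2×2 matrix `A` over `Cℓ_{0,m}` underlying the generating function
`G_{π/2}(x,y,a) = (0 1)·e^{-A}·(1,1)ᵀ` satisfies: (i) `A² = ((a-u)² - b)·I`;
(ii) for `D = s² + b - (u-a)² ≠ 0`, `M := D⁻¹(sI - A)` is the two-sided inverse
of `sI + A`; (iii) the bottom-row sum of `M` is `D⁻¹((s-u+a)·1 - yx)`. -/
theorem generating_function_matrix (m : ℕ) (hm : 1 ≤ m)
    (x y : EuclideanSpace ℝ (Fin m)) (a s : ℝ)
    (u b D : ℝ) (hu : u = ⟪x, y⟫) (hb : b = ‖x‖ ^ 2 * ‖y‖ ^ 2)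
    (hD : D = s ^ 2 + b - (u - a) ^ 2)
    (A : Matrix (Fin 2) (Fin 2) (CliffordAlgebra (Qneg m)))
    (hA : A = Matrix.of ![![algebraMap ℝ (CliffordAlgebra (Qneg m)) (a - u),
        -(CliffordAlgebra.ι (Qneg m) x * CliffordAlgebra.ι (Qneg m) y)],
      ![CliffordAlgebra.ι (Qneg m) y * CliffordAlgebra.ι (Qneg m) x,
        algebraMap ℝ (CliffordAlgebra (Qneg m)) (u - a)]]) :
    A * A = ((a - u) ^ 2 - b) • (1 : Matrix (Fin 2) (Fin 2) (CliffordAlgebra (Qneg m))) ∧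
    (D ≠ 0 →
      (s • (1 : Matrix (Fin 2) (Fin 2) (CliffordAlgebra (Qneg m))) + A) *
          (D⁻¹ • (s • (1 : Matrix (Fin 2) (Fin 2) (CliffordAlgebra (Qneg m))) - A)) = 1 ∧
      (D⁻¹ • (s • (1 : Matrix (Fin 2) (Fin 2) (CliffordAlgebra (Qneg m))) - A)) *
          (s • (1 : Matrix (Fin 2) (Fin 2) (CliffordAlgebra (Qneg m))) + A) = 1 ∧
      (D⁻¹ • (s • (1 : Matrix (Fin 2) (Fin 2) (CliffordAlgebra (Qneg m))) - A)) 1 0 +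
          (D⁻¹ • (s • (1 : Matrix (Fin 2) (Fin 2) (CliffordAlgebra (Qneg m))) - A)) 1 1 =
        D⁻¹ • ((s - u + a) • (1 : CliffordAlgebra (Qneg m)) -
          CliffordAlgebra.ι (Qneg m) y * CliffordAlgebra.ι (Qneg m) x)) := by
  have hxy := prod_four m x y
  have hyx := prod_four m y x
  have hsq : A * A = ((a - u) ^ 2 - b) •
      (1 : Matrix (Fin 2) (Fin 2) (CliffordAlgebra (Qneg m))) := by
    subst hA hb
    ext i j
    fin_cases i <;> fin_cases j <;>
      simp [Matrix.mul_apply, Fin.sum_univ_two, Matrix.one_apply,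
        Algebra.algebraMap_eq_smul_one, smul_smul, hxy, hyx, mul_comm (‖x‖^2)] <;>
      module
  refine ⟨hsq, fun hDne => ?_⟩
  have e0 : s • (1 : Matrix (Fin 2) (Fin 2) (CliffordAlgebra (Qneg m))) *
      (s • (1 : Matrix (Fin 2) (Fin 2) (CliffordAlgebra (Qneg m)))) = (s * s) • 1 := by
    simp [Matrix.smul_mul, Matrix.mul_smul, smul_smul]
  have e1 : s • (1 : Matrix (Fin 2) (Fin 2) (CliffordAlgebra (Qneg m))) * A = s • A := by
    simp [Matrix.smul_mul]
  have e2 : A * (s • (1 : Matrix (Fin 2) (Fin 2) (CliffordAlgebra (Qneg m)))) = s • A := by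
    simp [Matrix.mul_smul]
  have h1 : (s • (1 : Matrix (Fin 2) (Fin 2) (CliffordAlgebra (Qneg m))) + A) *
      (s • (1 : Matrix (Fin 2) (Fin 2) (CliffordAlgebra (Qneg m))) - A) =
      D • (1 : Matrix (Fin 2) (Fin 2) (CliffordAlgebra (Qneg m))) := by
    rw [add_mul, mul_sub, mul_sub, hsq, e0, e1, e2, hD]
    module
  have h2 : (s • (1 : Matrix (Fin 2) (Fin 2) (CliffordAlgebra (Qneg m))) - A) *
      (s • (1 : Matrix (Fin 2) (Fin 2) (CliffordAlgebra (Qneg m))) + A) =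
      D • (1 : Matrix (Fin 2) (Fin 2) (CliffordAlgebra (Qneg m))) := by
    rw [sub_mul, mul_add, mul_add, hsq, e0, e1, e2, hD]
    module
  refine ⟨?_, ?_, ?_⟩
  · rw [Matrix.mul_smul, h1, smul_smul, inv_mul_cancel₀ hDne, one_smul]
  · rw [Matrix.smul_mul, h2, smul_smul, inv_mul_cancel₀ hDne, one_smul]
  · subst hA
    simp [Matrix.one_apply, Algebra.algebraMap_eq_smul_one, smul_sub, sub_smul, smul_smul]
    module
end

section
/- Let m ≥ 1, x, y ∈ ℝ^m, and let s > 0, p, a be real numbers. Set u = ⟪x,y⟫, b = ‖x‖²‖y‖², W = √(s² + b), and let z₊ = s·cos p + i·W·sin p + i·u − a·e^{ip}, z₋ = s·cos p − i·W·sin p + i·u − a·e^{ip} ∈ ℂ, assuming z₊ ≠ 0 and z₋ ≠ 0. Then in the complexified Clifford algebra Cℓᶜ_{0,m}: (e^{ip}/(2W))·[ z₊⁻¹·((s+W)·1 − i·e^{−ip}·ι(y)·ι(x)) − z₋⁻¹·((s−W)·1 − i·e^{−ip}·ι(y)·ι(x)) ] = ((s·cos p + i·u − a·e^{ip})² + (s²+b)·sin²p)⁻¹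 · ( (s + i·u·e^{ip} − a·e^{2ip})·1 − sin p · ι(y)·ι(x) ). -/
open scoped RealInnerProductSpace

/-- The quadratic form `Q(v) = -Σⱼ vⱼ²` on `ℂ^m`, defining the complexified
Clifford algebra `Cℓᶜ_{0,m}`. -/
noncomputable def Qc (m : ℕ) : QuadraticForm ℂ (Fin m → ℂ) :=
  QuadraticMap.weightedSumSquares ℂ (fun _ : Fin m => (-1 : ℂ))

set_option maxHeartbeats 2000000 in
/-- Laplace-domain form of the generating function of the even-dimensional
fractional Clifford–Fourier kernels, in the complexified Clifford algebra. -/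
theorem fractional_generating_function_laplace_domain (m : ℕ) (hm : 1 ≤ m)
    (x y : EuclideanSpace ℝ (Fin m)) (s p a : ℝ) (hs : 0 < s)
    (u b W : ℝ) (hu : u = ⟪x, y⟫) (hb : b = ‖x‖ ^ 2 * ‖y‖ ^ 2)
    (hW : W = Real.sqrt (s ^ 2 + b))
    (zp zm : ℂ)
    (hzp : zp = (s : ℂ) * Real.cos p + Complex.I * W * Real.sin p + Complex.I * u -
      (a : ℂ) * Complex.exp ((p : ℂ) * Complex.I))
    (hzm : zm = (s : ℂ) * Real.cos p - Complex.I * W * Real.sin p + Complex.I * u -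
      (a : ℂ) * Complex.exp ((p : ℂ) * Complex.I))
    (hzp0 : zp ≠ 0) (hzm0 : zm ≠ 0)
    (cx cy : Fin m → ℂ) (hcx : cx = fun j => ((x j : ℝ) : ℂ))
    (hcy : cy = fun j => ((y j : ℝ) : ℂ)) :
    (Complex.exp ((p : ℂ) * Complex.I) / (2 * (W : ℂ))) •
        (zp⁻¹ • (((s : ℂ) + (W : ℂ)) • (1 : CliffordAlgebra (Qc m)) -
            (Complex.I * Complex.exp (-((p : ℂ) * Complex.I))) •
              (CliffordAlgebra.ι (Qc m) cy * CliffordAlgebra.ι (Qc m) cx)) -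
          zm⁻¹ • (((s : ℂ) - (W : ℂ)) • (1 : CliffordAlgebra (Qc m)) -
            (Complex.I * Complex.exp (-((p : ℂ) * Complex.I))) •
              (CliffordAlgebra.ι (Qc m) cy * CliffordAlgebra.ι (Qc m) cx))) =
      (((s : ℂ) * Real.cos p + Complex.I * u -
            (a : ℂ) * Complex.exp ((p : ℂ) * Complex.I)) ^ 2 +
          ((s : ℂ) ^ 2 + (b : ℂ)) * ((Real.sin p : ℂ)) ^ 2)⁻¹ •
        (((s : ℂ) + Complex.I * u * Complex.exp ((p : ℂ) * Complex.I) -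
            (a : ℂ) * Complex.exp (2 * (p : ℂ) * Complex.I)) • (1 : CliffordAlgebra (Qc m)) -
          ((Real.sin p : ℂ)) •
            (CliffordAlgebra.ι (Qc m) cy * CliffordAlgebra.ι (Qc m) cx)) := by
  have hb0 : (0:ℝ) ≤ b := by rw [hb]; positivity
  have hWpos : (0:ℝ) < W := by
    rw [hW]; apply Real.sqrt_pos.mpr; positivity
  have hWC : (W:ℂ) ≠ 0 := by exact_mod_cast hWpos.ne'
  have hW2 : (W:ℂ)^2 = (s:ℂ)^2 + (b:ℂ) := by
    have : W^2 = s^2 + b := by rw [hW]; exact Real.sq_sqrt (by positivity)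
    exact_mod_cast this
  have hpy : ((Real.cos p : ℝ):ℂ)^2 + ((Real.sin p:ℝ):ℂ)^2 = 1 := by
    exact_mod_cast Real.cos_sq_add_sin_sq p
  have h1 : Complex.exp ((p:ℂ) * Complex.I) =
      ((Real.cos p : ℝ):ℂ) + ((Real.sin p:ℝ):ℂ) * Complex.I := by
    rw [Complex.exp_mul_I, Complex.ofReal_cos, Complex.ofReal_sin]
  have h2 : Complex.exp (-((p:ℂ) * Complex.I)) =
      ((Real.cos p : ℝ):ℂ) - ((Real.sin p:ℝ):ℂ) * Complex.I := by
    rw [show -((p:ℂ)*Complex.I) = ((-p : ℝ):ℂ)*Complex.I by push_cast; ring,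
      Complex.exp_mul_I, Complex.ofReal_neg, Complex.cos_neg, Complex.sin_neg,
      Complex.ofReal_cos, Complex.ofReal_sin]
    ring
  have h3 : Complex.exp (2 * (p:ℂ) * Complex.I) =
      (((Real.cos p : ℝ):ℂ) + ((Real.sin p:ℝ):ℂ) * Complex.I) ^ 2 := by
    rw [show 2*(p:ℂ)*Complex.I = (p:ℂ)*Complex.I + (p:ℂ)*Complex.I by ring,
      Complex.exp_add, h1]
    ring
  rw [h1] at hzp hzm
  have hDzz : zp * zm = ((s : ℂ) * Real.cos p + Complex.I * u -
            (a : ℂ) * Complex.exp ((p : ℂ) * Complex.I)) ^ 2 +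
          ((s : ℂ) ^ 2 + (b : ℂ)) * ((Real.sin p : ℂ)) ^ 2 := by
    rw [hzp, hzm, h1]
    linear_combination ((Real.sin p:ℝ):ℂ)^2 * hW2 - ((W:ℂ)^2*((Real.sin p:ℝ):ℂ)^2) * Complex.I_sq
  have hD0 : (((s : ℂ) * Real.cos p + Complex.I * u -
            (a : ℂ) * Complex.exp ((p : ℂ) * Complex.I)) ^ 2 +
          ((s : ℂ) ^ 2 + (b : ℂ)) * ((Real.sin p : ℂ)) ^ 2) ≠ 0 :=
    hDzz ▸ mul_ne_zero hzp0 hzm0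
  have hzpinv : zp⁻¹ = zm * (((s : ℂ) * Real.cos p + Complex.I * u -
            (a : ℂ) * Complex.exp ((p : ℂ) * Complex.I)) ^ 2 +
          ((s : ℂ) ^ 2 + (b : ℂ)) * ((Real.sin p : ℂ)) ^ 2)⁻¹ := by
    rw [← hDzz]; field_simp
  have hzminv : zm⁻¹ = zp * (((s : ℂ) * Real.cos p + Complex.I * u -
            (a : ℂ) * Complex.exp ((p : ℂ) * Complex.I)) ^ 2 +
          ((s : ℂ) ^ 2 + (b : ℂ)) * ((Real.sin p : ℂ)) ^ 2)⁻¹ := by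
    rw [← hDzz]; field_simp
  rw [hzpinv, hzminv, h1, h2, h3]
  rw [Complex.ofReal_cos, Complex.ofReal_sin] at hzp hzm ⊢
  rw [h1, Complex.ofReal_cos, Complex.ofReal_sin] at hD0
  have hpy2 : Complex.cos (p:ℂ) ^ 2 + Complex.sin (p:ℂ) ^ 2 = 1 :=
    Complex.cos_sq_add_sin_sq _
  set C := Complex.cos (p:ℂ) with hCdef
  set S := Complex.sin (p:ℂ) with hSdef
  set Dv := ((s:ℂ) * C + Complex.I * (u:ℂ) - (a:ℂ) * (C + S * Complex.I)) ^ 2 +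
      ((s:ℂ) ^ 2 + (b:ℂ)) * S ^ 2 with hDvdef
  match_scalars
  · field_simp [hD0]
    linear_combination ((C + S * Complex.I) * ((s:ℂ) + W)) * hzm -
      ((C + S * Complex.I) * ((s:ℂ) - W)) * hzp +
      (2 * (W:ℂ) * s) * hpy2 - (2 * (W:ℂ) * (s:ℂ) * S ^ 2) * Complex.I_sq
  · field_simp [hD0]
    linear_combination
      ((C + S * Complex.I) * (Complex.I * (C - S * Complex.I))) * (hzp - hzm) +
      (2 * (W:ℂ) * S * Complex.I ^ 2) * hpy2 +
      (2 * (W:ℂ) * S * (1 - S ^ 2 * Complex.I ^ 2)) * Complex.I_sq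
end
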